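/- arXiv:1712.06709 — 2 statements merged into one kernel-verified Lean document; each statement's English description precedes it below -/
import Mathlib

section
/- Let A be a monotone algorithm for a graph problem in which each agent i owns a set E_i of edges, each edge e has cost t_i(e) ≥ 0, and the cost of agent i for a solution x (a subset of edges) is the sum of t_i(e) over e in x ∩ E_i. Fix a type profile t and an agent i, and let S = A(t) ∩ E_i be the set of i's edges selected. If t'_i is another type of agent i satisfying t'_i(e) < t_i(e) for every e in S and t'_i(e) > t_i(e) for every e in E_i \ S, then A(t'_i, t_{-i}) ∩ E_i = S. -/
/-- For a monotone algorithm on a graph problem, if agent i lowers the cost of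
her selected edges and raises the cost of her non-selected edges, her selected edge set
does not change. -/
theorem monotone_algorithm_stable_selection
    {n : ℕ} {E : Type*} [Fintype E] [DecidableEq E]
    (owner : E → Fin n)
    (A : (Fin n → E → ℝ) → Finset E)
    (hmon : ∀ (t : Fin n → E → ℝ) (i : Fin n) (t'i : E → ℝ),
      (∑ e ∈ (A t).filter (fun e => owner e = i), t i e) +
        (∑ e ∈ (A (Function.update t i t'i)).filter (fun e => owner e = i), t'i e) ≤
      (∑ e ∈ (A (Function.update t i t'i)).filter (fun e => owner e = i), t i e) +
        (∑ e ∈ (A t).filter (fun e => owner e = i), t'i e))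
    (t : Fin n → E → ℝ) (i : Fin n)
    (hnonneg : ∀ e, 0 ≤ t i e)
    (t'i : E → ℝ)
    (hlow : ∀ e, owner e = i → e ∈ A t → t'i e < t i e)
    (hhigh : ∀ e, owner e = i → e ∉ A t → t i e < t'i e) :
    (A (Function.update t i t'i)).filter (fun e => owner e = i) =
      (A t).filter (fun e => owner e = i) := by
  set S : Finset E := (A t).filter (fun e => owner e = i) with hS
  set S' : Finset E := (A (Function.update t i t'i)).filter (fun e => owner e = i) with hS'
  have key := hmon t i t'i
  have h1 : ∑ e ∈ S', (t'i e - t i e) ≤ ∑ e ∈ S, (t'i e - t i e) := by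
    rw [Finset.sum_sub_distrib, Finset.sum_sub_distrib]
    linarith
  have hsplit : ∀ (X Y : Finset E) (f : E → ℝ),
      ∑ e ∈ X, f e = ∑ e ∈ X ∩ Y, f e + ∑ e ∈ X \ Y, f e := by
    intro X Y f
    exact (Finset.sum_inter_add_sum_sdiff X Y f).symm
  have h2 : ∑ e ∈ S' \ S, (t'i e - t i e) ≤ ∑ e ∈ S \ S', (t'i e - t i e) := by
    rw [hsplit S' S (fun e => t'i e - t i e), hsplit S S' (fun e => t'i e - t i e),
      Finset.inter_comm] at h1
    linarith
  have hneg : ∀ e ∈ S \ S', t'i e - t i e < 0 := by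
    intro e he
    rw [Finset.mem_sdiff, hS, Finset.mem_filter] at he
    have := hlow e he.1.2 he.1.1
    linarith
  have hpos : ∀ e ∈ S' \ S, 0 < t'i e - t i e := by
    intro e he
    rw [Finset.mem_sdiff, hS', Finset.mem_filter] at he
    have howner : owner e = i := he.1.2
    have hnot : e ∉ A t := by
      intro h
      exact he.2 (by rw [hS, Finset.mem_filter]; exact ⟨h, howner⟩)
    have := hhigh e howner hnot
    linarith
  have hSS' : S \ S' = ∅ := by
    by_contra h
    obtain ⟨e, he⟩ := Finset.nonempty_of_ne_empty h
    have hlt : ∑ e ∈ S \ S', (t'i e - t i e) < 0 :=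
      Finset.sum_neg hneg ⟨e, he⟩
    have hge : 0 ≤ ∑ e ∈ S' \ S, (t'i e - t i e) :=
      Finset.sum_nonneg (fun e he => le_of_lt (hpos e he))
    linarith
  have hS'S : S' \ S = ∅ := by
    by_contra h
    obtain ⟨e, he⟩ := Finset.nonempty_of_ne_empty h
    have hlt : 0 < ∑ e ∈ S' \ S, (t'i e - t i e) :=
      Finset.sum_pos hpos ⟨e, he⟩
    have hle : ∑ e ∈ S \ S', (t'i e - t i e) ≤ 0 :=
      Finset.sum_nonpos (fun e he => le_of_lt (hneg e he))
    linarith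
  exact Finset.Subset.antisymm (Finset.sdiff_eq_empty_iff_subset.mp hS'S)
    (Finset.sdiff_eq_empty_iff_subset.mp hSS')
end

section
/- In a directed graph consisting of a chain of ℓ blocks, where block k consists of n internally-disjoint directed paths from u_k to u_{k+1}, any arborescence rooted at u_1 spanning all nodes contains, for each block k, at least one complete u_k-to-u_{k+1} path among the n parallel paths of that block. -/
/-- In a directed chain of ℓ blocks, block k consisting of n internally
disjoint parallel rightward paths (each of n edges) from u_k to u_{k+1}, possibly with
leftward edges paired with the non-first rightward edges, any arborescence rooted at u_1
(a set T of graph edges from which every vertex is reachable from u_1) contains, for each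
block k, all n rightward edges of some parallel path of that block. -/
theorem arborescence_contains_full_path_per_block
    {V : Type*} (ℓ n : ℕ) (hn : 0 < n)
    (u : Fin (ℓ + 1) → V)
    (p : Fin ℓ → Fin n → Fin (n + 1) → V)
    (hstart : ∀ k i, p k i 0 = u k.castSucc)
    (hend : ∀ k i, p k i (Fin.last n) = u k.succ)
    (hu_inj : Function.Injective u)
    (hint_ne_u : ∀ k i (j : Fin (n + 1)), j ≠ 0 → j ≠ Fin.last n → ∀ m, p k i j ≠ u m)
    (hint_inj : ∀ k i (j : Fin (n + 1)) k' i' (j' : Fin (n + 1)),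
      j ≠ 0 → j ≠ Fin.last n → j' ≠ 0 → j' ≠ Fin.last n →
      p k i j = p k' i' j' → k = k' ∧ i = i' ∧ j = j')
    (T : V → V → Prop)
    (hT : ∀ a b, T a b →
      (∃ k, ∃ i, ∃ j : Fin n, a = p k i j.castSucc ∧ b = p k i j.succ) ∨
      (∃ k, ∃ i, ∃ j : Fin n, (j : ℕ) ≠ 0 ∧ a = p k i j.succ ∧ b = p k i j.castSucc))
    (hreach : ∀ k i j, Relation.ReflTransGen T (u 0) (p k i j)) :
    ∀ k : Fin ℓ, ∃ i : Fin n, ∀ j : Fin n, T (p k i j.castSucc) (p k i j.succ) := by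
  intro k
  -- restricted relation: edges whose source is not u (k+1)
  set T' : V → V → Prop := fun a b => T a b ∧ a ≠ u k.succ with hT'def
  -- u (k+1) is reachable
  have hW0 : Relation.ReflTransGen T (u 0) (u k.succ) := by
    have := hreach k ⟨0, hn⟩ (Fin.last n)
    rwa [hend] at this
  -- first-visit truncation
  have hfirst : ∀ x, Relation.ReflTransGen T (u 0) x →
      Relation.ReflTransGen T' (u 0) x ∨ Relation.ReflTransGen T' (u 0) (u k.succ) := by
    intro x h
    induction h with
    | refl => exact Or.inl Relation.ReflTransGen.refl
    | @tail b c hb hbc ih =>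
      rcases ih with ih | ih
      · by_cases hbeq : b = u k.succ
        · exact Or.inr (hbeq ▸ ih)
        · exact Or.inl (ih.tail ⟨hbc, hbeq⟩)
      · exact Or.inr ih
  have W : Relation.ReflTransGen T' (u 0) (u k.succ) := by
    rcases hfirst _ hW0 with h | h <;> exact h
  -- key induction: reaching an internal node p k i m (avoiding u k.succ) forces
  -- all forward edges of path i below m to be in T
  have key : ∀ x, Relation.ReflTransGen T' (u 0) x → ∀ i (m : Fin (n+1)), m ≠ 0 →
      (m : ℕ) < n → x = p k i m →
      ∀ j : Fin n, (j : ℕ) < (m : ℕ) → T (p k i j.castSucc) (p k i j.succ) := by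
    intro x h
    induction h with
    | refl =>
      intro i m hm0 hmn hx j hj
      exact absurd hx.symm (hint_ne_u k i m hm0
        (Fin.ne_of_val_ne (by simp [Fin.val_last]; omega)) 0)
    | @tail b c hb e ih =>
      intro i m hm0 hmn hx j hj
      obtain ⟨hTbc, hbne⟩ := e
      have hml : m ≠ Fin.last n := Fin.ne_of_val_ne (by simp [Fin.val_last]; omega)
      rcases hT _ _ hTbc with ⟨k', i', j0, hb_eq, hc_eq⟩ | ⟨k', i', j0, hj00, hb_eq, hc_eq⟩
      · -- forward edge into c
        have hsl : (j0.succ : ℕ) ≠ n := by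
          intro hcon
          have hjl : j0.succ = Fin.last n :=
            Fin.ext (by simp only [Fin.val_succ, Fin.val_last] at hcon ⊢; omega)
          apply hint_ne_u k i m hm0 hml k'.succ
          rw [← hx, hc_eq, hjl, hend]
        obtain ⟨hk, hi, hjm⟩ := hint_inj k' i' j0.succ k i m
          (Fin.succ_ne_zero _)
          (Fin.ne_of_val_ne (by simp only [Fin.val_succ, Fin.val_last] at hsl ⊢; omega))
          hm0 hml (hc_eq.symm.trans hx)
        rw [hk, hi] at hb_eq hc_eq
        have hmval : (m : ℕ) = (j0 : ℕ) + 1 := by rw [← hjm]; simp [Fin.val_succ]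
        rcases Nat.lt_or_ge (j : ℕ) (j0 : ℕ) with hlt | hge
        · -- use ih at b = p k i j0.castSucc
          have hj0pos : (j0 : ℕ) ≠ 0 := by omega
          exact ih i j0.castSucc (Fin.ne_of_val_ne (by simpa using hj0pos))
            (by simpa using j0.isLt) hb_eq j (by simpa using hlt)
        · -- j = j0, the edge itself
          have : j = j0 := Fin.ext (by omega)
          subst this
          rw [hb_eq, hc_eq] at hTbc
          exact hTbc
      · -- backward edge into c
        obtain ⟨hk, hi, hjm⟩ := hint_inj k' i' j0.castSucc k i m
          (Fin.ne_of_val_ne (by simpa using hj00))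
          (Fin.ne_of_val_ne (by simp [Fin.val_last]; exact Nat.ne_of_lt j0.isLt))
          hm0 hml (hc_eq.symm.trans hx)
        rw [hk, hi] at hb_eq hc_eq
        have hmval : (m : ℕ) = (j0 : ℕ) := by rw [← hjm]; simp
        by_cases hsl : (j0.succ : ℕ) = n
        · -- b would be u k.succ, contradiction
          exfalso
          apply hbne
          have hjl : j0.succ = Fin.last n :=
            Fin.ext (by simp only [Fin.val_succ, Fin.val_last] at hsl ⊢; omega)
          rw [hb_eq, hjl, hend]
        · exact ih i j0.succ (Fin.succ_ne_zero _)
            (by simp only [Fin.val_succ] at hsl ⊢; omega) hb_eq j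
            (by simp only [Fin.val_succ]; omega)
  -- top level: analyze the last edge into u k.succ
  rcases Relation.ReflTransGen.cases_tail W with heq | ⟨b, hb, hTb, hbne⟩
  · exfalso
    have := hu_inj heq
    exact Fin.succ_ne_zero k this
  · rcases hT _ _ hTb with ⟨k', i', j0, hb_eq, hc_eq⟩ | ⟨k', i', j0, hj00, hb_eq, hc_eq⟩
    · -- forward edge ending at u k.succ
      have hsl : (j0.succ : ℕ) = n := by
        by_contra hcon
        exact hint_ne_u k' i' j0.succ (Fin.succ_ne_zero _)
          (Fin.ne_of_val_ne (by simp only [Fin.val_succ, Fin.val_last] at hcon ⊢; omega))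
          k.succ hc_eq.symm
      have hjl : j0.succ = Fin.last n :=
        Fin.ext (by simp only [Fin.val_succ, Fin.val_last] at hsl ⊢; omega)
      have hkk : k' = k := by
        have : u k'.succ = u k.succ := by rw [← hend k' i', ← hjl, ← hc_eq]
        exact Fin.succ_injective _ (hu_inj this)
      subst hkk
      refine ⟨i', fun j => ?_⟩
      have hj0val : (j0 : ℕ) + 1 = n := by simpa [Fin.val_succ] using hsl
      by_cases hje : (j : ℕ) = (j0 : ℕ)
      · have : j = j0 := Fin.ext hje
        subst this
        rw [hb_eq] at hTb
        rw [hc_eq] at hTb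
        exact hTb
      · have hlt : (j : ℕ) < (j0 : ℕ) := by have := j.isLt; omega
        have hj0pos : (j0 : ℕ) ≠ 0 := by omega
        exact key b hb i' j0.castSucc (Fin.ne_of_val_ne (by simpa using hj0pos))
          (by simpa using j0.isLt) hb_eq j (by simpa using hlt)
    · -- backward edge cannot end at u k.succ
      exfalso
      exact hint_ne_u k' i' j0.castSucc (Fin.ne_of_val_ne (by simpa using hj00))
        (Fin.ne_of_val_ne (by simp [Fin.val_last]; exact Nat.ne_of_lt j0.isLt))
        k.succ hc_eq.symm
end
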